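/- With p(a,(c,d)) denoting the map D × D → D given by ((a,b),(c,d)) ↦ (a+(b-a)c, a+(b-a)d), and h_t the homotopy on Dᵐ above, for every a = (a,b) ∈ D, every (c₁,d₁),…,(cₘ,dₘ) ∈ D, every t ∈ [0,1] and every i: p(a, h_t((cⱼ,dⱼ))ᵢ) = h_t(p(a,(c₁,d₁)),…,p(a,(cₘ,dₘ)))ᵢ. That is, left multiplication by p(a,−) commutes with the homotopy h. -/
import Mathlib


/-- left multiplication p(a,−) commutes with the homotopy h:
p(a, h_t((cⱼ,dⱼ))ᵢ) = h_t(p(a,(c₁,d₁)),…,p(a,(cₘ,dₘ)))ᵢ (m = n+1 ≥ 1). -/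
theorem stmt8 (n : ℕ) (a b : ℝ) (c d : Fin (n + 1) → ℝ)
    (ha : 0 < a) (hab : a < b) (hb : b ≤ 1)
    (h : ∀ j, 0 < c j ∧ c j < d j ∧ d j ≤ 1)
    (t : ℝ) (ht : t ∈ Set.Icc (0:ℝ) 1) (i : Fin (n + 1)) :
    let C := Finset.univ.sup' Finset.univ_nonempty c
    let D := C + Finset.univ.inf' Finset.univ_nonempty (fun j => d j - c j)
    let c' := fun j => a + (b - a) * c j
    let d' := fun j => a + (b - a) * d j
    let C' := Finset.univ.sup' Finset.univ_nonempty c'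
    let D' := C' + Finset.univ.inf' Finset.univ_nonempty (fun j => d' j - c' j)
    a + (b - a) * (C + t * (c i - C)) = C' + t * (c' i - C') ∧
    a + (b - a) * (D + t * (d i - D)) = D' + t * (d' i - D') := by
  intro C D c' d' C' D'
  have hba : 0 < b - a := sub_pos.mpr hab
  have hC' : C' = a + (b - a) * C := by
    have := map_finset_sup' ((OrderIso.mulLeft₀ (b - a) hba).trans (OrderIso.addLeft a))
      Finset.univ_nonempty c
    simp only [Function.comp, OrderIso.trans_apply, OrderIso.mulLeft₀_apply,
      OrderIso.addLeft_apply] at this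
    exact this.symm
  have hD' : Finset.univ.inf' Finset.univ_nonempty (fun j => d' j - c' j)
      = (b - a) * Finset.univ.inf' Finset.univ_nonempty (fun j => d j - c j) := by
    have := map_finset_inf' (OrderIso.mulLeft₀ (b - a) hba) Finset.univ_nonempty
      (fun j => d j - c j)
    simp only [Function.comp, OrderIso.mulLeft₀_apply] at this
    simp only [d', c']
    rw [show (fun j => a + (b - a) * d j - (a + (b - a) * c j))
        = fun j => (b - a) * (d j - c j) by funext j; ring]
    simpa using this.symm
  constructor
  · rw [hC']; simp only [c']; ring
  · simp only [D', D, hC', hD', c', d']; ring
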